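/- arXiv:2503.08646 — 2 statements merged into one kernel-verified Lean document; each statement's English description precedes it below -/
import Mathlib

section
/- Let u_1,...,u_n be an orthonormal family in ℂ^{2n} and define μ_u = Σᵢ (uᵢ uᵢ† − uᵢ* uᵢᵗ) (where uᵢ* is the entrywise conjugate and uᵢᵗ the transpose). If additionally uᵢᵗ u_j = 0 for all i,j, and w is a unit vector with μ_u w = w, then w lies in the span of u_1,...,u_n and uᵢᵗ w = 0 for all i. -/
open Matrix

lemma sum_mulVec' {m k : Type*} [Fintype m] [Fintype k] (s : Finset k)
    (A : k → Matrix m m ℂ) (x : m → ℂ) :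
    (∑ i ∈ s, A i).mulVec x = ∑ i ∈ s, (A i).mulVec x := by
  funext j
  simp [Matrix.mulVec, dotProduct, Matrix.sum_apply, Finset.sum_mul]
  rw [Finset.sum_comm]

lemma dotProduct_sum' {m k : Type*} [Fintype m] [Fintype k] (s : Finset k)
    (v : m → ℂ) (f : k → (m → ℂ)) :
    v ⬝ᵥ (∑ i ∈ s, f i) = ∑ i ∈ s, v ⬝ᵥ f i := by
  simp [dotProduct, Finset.sum_apply, Finset.mul_sum]
  rw [Finset.sum_comm]

lemma vecMulVec_mulVec' {m : Type*} [Fintype m] (a b x : m → ℂ) :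
    (vecMulVec a b).mulVec x = (b ⬝ᵥ x) • a := by
  funext j
  simp [vecMulVec, mulVec, dotProduct, Finset.mul_sum, mul_assoc, mul_comm, mul_left_comm]

/-- For an isotropic orthonormal family `u₁, …, uₙ` in `ℂ^{2n}`, set
`μ_u = Σᵢ (uᵢ uᵢ† − uᵢ* uᵢᵗ)`.  If `w` is a unit vector with `μ_u w = w`, then `uᵢᵗ w = 0`
for all `i` and `w` lies in the span of the `uᵢ`. -/
theorem eigenvector_in_span_of_isotropic_family {n : ℕ}
    (u : Fin n → (Fin (2 * n) → ℂ))
    (horth : ∀ i j, star (u i) ⬝ᵥ u j = if i = j then 1 else 0)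
    (hiso : ∀ i j, u i ⬝ᵥ u j = 0)
    (μ : Matrix (Fin (2 * n)) (Fin (2 * n)) ℂ)
    (hμ : μ = ∑ i, (vecMulVec (u i) (star (u i)) - vecMulVec (star (u i)) (u i)))
    (w : Fin (2 * n) → ℂ) (hw : ∑ i, ‖w i‖ ^ 2 = 1)
    (heig : μ.mulVec w = w) :
    (∀ i, u i ⬝ᵥ w = 0) ∧ w ∈ Submodule.span ℂ (Set.range u) := by
  have hkey : w = ∑ i, ((star (u i) ⬝ᵥ w) • u i - (u i ⬝ᵥ w) • star (u i)) := by
    refine heig.symm.trans ?_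
    rw [hμ, sum_mulVec' _ _ _]
    refine Finset.sum_congr rfl fun i _ => ?_
    rw [Matrix.sub_mulVec, vecMulVec_mulVec', vecMulVec_mulVec']
  have hb : ∀ j, u j ⬝ᵥ w = 0 := by
    intro j
    have h2 : u j ⬝ᵥ w = -(u j ⬝ᵥ w) := by
      conv_lhs => rw [hkey]
      rw [dotProduct_sum' _ _ _]
      rw [Finset.sum_eq_single j]
      · simp [dotProduct_sub, dotProduct_smul, hiso, dotProduct_comm (u j) (star (u j)), horth]
      · intro i _ hij
        simp only [dotProduct_sub, dotProduct_smul, hiso, dotProduct_comm (u j) (star (u i)),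
          horth, if_neg hij, smul_zero, mul_zero, smul_eq_mul, zero_sub, neg_zero]
      · simp
    exact add_self_eq_zero.mp (eq_neg_iff_add_eq_zero.mp h2)
  refine ⟨hb, ?_⟩
  rw [hkey]
  refine Submodule.sum_mem _ fun i _ => ?_
  rw [hb i]
  simpa using Submodule.smul_mem _ (star (u i) ⬝ᵥ w) (Submodule.subset_span (Set.mem_range_self i))
end

section
/- Let u_1,...,u_k ∈ ℂ^{2n} satisfy u_i† u_j = δ_{ij} and u_iᵗ ω u_j = 0, where ω is a real matrix with ω² = −I and ωᵗ = −ω. Define μ = Σⱼ (uⱼ uⱼ† + ω uⱼ* uⱼᵗ ω). Then each u_i is an eigenvector of μ with eigenvalue 1, each ω u_i* is an eigenvector with eigenvalue −1, and μ annihilates the orthogonal complement of span{u_i, ω u_i*}. -/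
/-!
With `vⱼ = ω uⱼ*`, reality and antisymmetry of `ω` give `vⱼ† x = -(uⱼᵗ ω x)`, so
`μ = Σⱼ (uⱼ uⱼ† - vⱼ vⱼ†)` is a difference of rank-one projections. Isotropy makes every `vⱼ`
orthogonal to every `uᵢ`, and `ω² = -1` makes the `vⱼ` orthonormal, so `{uᵢ} ∪ {vᵢ}` is an
orthonormal family on which `μ` acts by `+1` and `-1` and whose orthogonal complement it kills.
-/

open Matrix

namespace Matrix

variable {ι m R : Type*} [Fintype ι] [Fintype m] [CommRing R]

theorem mul_vecMulVec_mul_mulVec (A B : Matrix m m R) (a b x : m → R) :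
    (A * vecMulVec a b * B) *ᵥ x = (b ⬝ᵥ B *ᵥ x) • (A *ᵥ a) := by
  rw [← mulVec_mulVec, ← mulVec_mulVec, vecMulVec_mulVec, op_smul_eq_smul, mulVec_smul]

theorem dotProduct_mulVec_of_transpose_eq_neg {ω : Matrix m m R} (hωt : ωᵀ = -ω)
    (v w : m → R) : v ⬝ᵥ ω *ᵥ w = -(ω *ᵥ v ⬝ᵥ w) := by
  rw [dotProduct_mulVec, ← mulVec_transpose, hωt, neg_mulVec, neg_dotProduct]

variable [StarRing R]

def symplecticMomentMap (ω : Matrix m m R) (u : ι → m → R) : Matrix m m R :=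
  ∑ j, (vecMulVec (u j) (star (u j)) + ω * vecMulVec (star (u j)) (u j) * ω)

variable {ω : Matrix m m R}

theorem star_mulVec_of_real (hreal : ∀ i j, star (ω i j) = ω i j) (v : m → R) :
    star (ω *ᵥ v) = ω *ᵥ star v := by
  ext i
  simp [mulVec, dotProduct, hreal]

theorem star_mulVec_star_dotProduct (hreal : ∀ i j, star (ω i j) = ω i j) (hωt : ωᵀ = -ω)
    (u x : m → R) : star (ω *ᵥ star u) ⬝ᵥ x = -(u ⬝ᵥ ω *ᵥ x) := by
  rw [star_mulVec_of_real hreal, star_star, dotProduct_mulVec_of_transpose_eq_neg hωt, neg_neg]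

theorem symplecticMomentMap_mulVec (hreal : ∀ i j, star (ω i j) = ω i j) (hωt : ωᵀ = -ω)
    (u : ι → m → R) (x : m → R) :
    symplecticMomentMap ω u *ᵥ x =
      ∑ j, ((star (u j) ⬝ᵥ x) • u j - (star (ω *ᵥ star (u j)) ⬝ᵥ x) • ω *ᵥ star (u j)) := by
  rw [symplecticMomentMap, sum_mulVec]
  refine Finset.sum_congr rfl fun j _ => ?_
  rw [add_mulVec, vecMulVec_mulVec, op_smul_eq_smul, mul_vecMulVec_mul_mulVec,
    star_mulVec_star_dotProduct hreal hωt, neg_smul, sub_neg_eq_add]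

theorem star_dotProduct_mulVec_star_eq_zero (hreal : ∀ i j, star (ω i j) = ω i j)
    {u v : m → R} (hiso : u ⬝ᵥ ω *ᵥ v = 0) : star u ⬝ᵥ ω *ᵥ star v = 0 := by
  rw [← star_mulVec_of_real hreal, star_dotProduct_star, dotProduct_comm, hiso, star_zero]

theorem star_mulVec_star_dotProduct_mulVec_star [DecidableEq m]
    (hreal : ∀ i j, star (ω i j) = ω i j) (hω2 : ω * ω = -1) (hωt : ωᵀ = -ω) (u v : m → R) :
    star (ω *ᵥ star u) ⬝ᵥ ω *ᵥ star v = star v ⬝ᵥ u := by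
  rw [star_mulVec_star_dotProduct hreal hωt, mulVec_mulVec, hω2, neg_mulVec, one_mulVec,
    dotProduct_neg, neg_neg, dotProduct_comm]

end Matrix

/-- Eigenstructure of the symplectic Grassmannian moment map: let `ω` be a real matrix on
`ℂ^{2n}` with `ω² = −1` and `ωᵗ = −ω`, and let `u₁, …, u_k` be an `ω`-isotropic orthonormal
family.  Then `μ = Σⱼ (uⱼ uⱼ† + ω uⱼ* uⱼᵗ ω)` has each `uᵢ` as an eigenvector with
eigenvalue `1`, each `ω uᵢ*` as an eigenvector with eigenvalue `−1`, and annihilates the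
orthogonal complement of the span of the `uᵢ` and `ω uᵢ*`. -/
theorem symplectic_moment_map_eigenstructure {n k : ℕ}
    (ω : Matrix (Fin (2 * n)) (Fin (2 * n)) ℂ)
    (hreal : ∀ i j, star (ω i j) = ω i j)
    (hω2 : ω * ω = -1) (hωt : ω.transpose = -ω)
    (u : Fin k → (Fin (2 * n) → ℂ))
    (horth : ∀ i j, star (u i) ⬝ᵥ u j = if i = j then 1 else 0)
    (hiso : ∀ i j, u i ⬝ᵥ ω.mulVec (u j) = 0)
    (μ : Matrix (Fin (2 * n)) (Fin (2 * n)) ℂ)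
    (hμ : μ = ∑ j, (vecMulVec (u j) (star (u j)) +
      ω * vecMulVec (star (u j)) (u j) * ω)) :
    (∀ i, μ.mulVec (u i) = u i) ∧
    (∀ i, μ.mulVec (ω.mulVec (star (u i))) = -(ω.mulVec (star (u i)))) ∧
    (∀ x : Fin (2 * n) → ℂ,
      (∀ i, star (u i) ⬝ᵥ x = 0 ∧ star (ω.mulVec (star (u i))) ⬝ᵥ x = 0) →
      μ.mulVec x = 0) := by
  have hμx : ∀ x, μ *ᵥ x = ∑ j, ((star (u j) ⬝ᵥ x) • u j -
      (star (ω *ᵥ star (u j)) ⬝ᵥ x) • ω *ᵥ star (u j)) :=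
    hμ ▸ symplecticMomentMap_mulVec hreal hωt u
  refine ⟨fun i => ?_, fun i => ?_, fun x hx => ?_⟩
  · simp [hμx, horth, star_mulVec_star_dotProduct hreal hωt, hiso]
  · simp [hμx, star_dotProduct_mulVec_star_eq_zero hreal (hiso _ _),
      star_mulVec_star_dotProduct_mulVec_star hreal hω2 hωt, horth]
  · simp [hμx, hx]
end
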